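/- Any injective monoid homomorphism ξ : M → E which fixes every element of G pointwise also fixes every member of M, i.e. ξ(f) = f for all f ∈ M. -/

import Mathlib

/-!
For `f ∈ M` and `g ∈ G` we have `g * f = f ↔ g * ξ f = ξ f`, because `ξ` is injective and
fixes `g`. So an automorphism of `ℚ` fixes `range f` pointwise iff it fixes `range (ξ f)`
pointwise. Since an open interval missed by a set carries an automorphism fixing exactly the
complement of that interval, `range f` and `range (ξ f)` miss the same open intervals and have
the same isolated points. The same automorphisms show that `ξ f` is injective: if it were
constant on an interval, composing `f` with an automorphism supported there would not change
`ξ f`.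

Given `x₀`, let `w ∈ M` fix `x₀` and open a gap of radius `r` around it. Then `f x₀` is
isolated in `range (f ∘ w)`, hence in `range (ξ f ∘ ξ w)`, so `f x₀ = ξ f p` for some
`p ∈ range (ξ w)`, and `p` lies outside `(x₀ - r, x₀ + r)` unless `p = x₀`. As `ξ f` is
injective, `p` does not depend on `r`, and letting `r` grow forces `p = x₀`.
-/

def Mmon : Submonoid (Function.End ℚ) where
  carrier := {f | StrictMono f}
  mul_mem' := fun hf hg => hf.comp hg
  one_mem' := strictMono_id

def Emon : Submonoid (Function.End ℚ) where
  carrier := {f | Monotone f}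
  mul_mem' := fun hf hg => hf.comp hg
  one_mem' := monotone_id

open Set Function

section FixedPoints

variable {α β : Type*} [LinearOrder α] [DenselyOrdered α] [Countable α] {c d y : α}

theorem exists_orderIso_fixedPoints_eq_compl_Ioo (hcd : c < d) :
    ∃ g : α ≃o α, fixedPoints g = (Ioo c d)ᶜ := by
  have : Nonempty (Ioo c d) := (nonempty_Ioo.mpr hcd).to_subtype
  obtain ⟨e⟩ := Order.iso_of_countable_dense (Ioo c d) ℚ
  let σ : Ioo c d ≃o Ioo c d := (e.trans (OrderIso.addRight 1)).trans e.symm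
  have hσ : ∀ x, σ x ≠ x := fun x h => by
    have := congrArg e h
    simp [σ] at this
  classical
  let g : Equiv.Perm α := Equiv.Perm.ofSubtype σ.toEquiv
  have hg_in : ∀ x (hx : x ∈ Ioo c d), g x = σ ⟨x, hx⟩ := fun _ hx =>
    Equiv.Perm.ofSubtype_apply_of_mem _ hx
  have hg_out : ∀ x ∉ Ioo c d, g x = x := fun _ hx =>
    Equiv.Perm.ofSubtype_apply_of_not_mem _ hx
  have hg : StrictMono g := by
    intro x y hxy
    by_cases hx : x ∈ Ioo c d <;> by_cases hy : y ∈ Ioo c d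
    · rw [hg_in x hx, hg_in y hy]
      exact σ.strictMono (show (⟨x, hx⟩ : Ioo c d) < ⟨y, hy⟩ from hxy)
    · rw [hg_in x hx, hg_out y hy]
      have hdy : d ≤ y := by_contra fun h => hy ⟨hx.1.trans hxy, not_le.mp h⟩
      exact (σ ⟨x, hx⟩).2.2.trans_le hdy
    · rw [hg_out x hx, hg_in y hy]
      have hxc : x ≤ c := by_contra fun h => hx ⟨not_le.mp h, hxy.trans hy.2⟩
      exact hxc.trans_lt (σ ⟨y, hy⟩).2.1
    · rwa [hg_out x hx, hg_out y hy]
  refine ⟨hg.orderIsoOfSurjective g g.surjective, Set.ext fun x => ?_⟩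
  by_cases hx : x ∈ Ioo c d
  · have hmoved : g x ≠ x := by
      rw [hg_in x hx]
      exact fun h => hσ ⟨x, hx⟩ (Subtype.ext h)
    simpa [IsFixedPt, hx] using hmoved
  · simpa [IsFixedPt, hx] using hg_out x hx

theorem disjoint_range_Ioo_of_forall_fixedPoints {u v : β → α}
    (h : ∀ g : α ≃o α, range v ⊆ fixedPoints g → range u ⊆ fixedPoints g)
    (hv : Disjoint (range v) (Ioo c d)) : Disjoint (range u) (Ioo c d) := by
  rw [Set.disjoint_left]
  rintro _ ⟨x, rfl⟩ hx
  obtain ⟨g, hg⟩ := exists_orderIso_fixedPoints_eq_compl_Ioo (hx.1.trans hx.2)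
  have hfixed := h g (hg ▸ hv.subset_compl_right) ⟨x, rfl⟩
  rw [hg] at hfixed
  exact hfixed hx

theorem range_inter_Ioo_eq_singleton_of_forall_fixedPoints {u v : β → α}
    (h : ∀ g : α ≃o α, range v ⊆ fixedPoints g ↔ range u ⊆ fixedPoints g)
    (hv : range v ∩ Ioo c d = {y}) : range u ∩ Ioo c d = {y} := by
  have hy : y ∈ range v ∩ Ioo c d := hv ▸ rfl
  have hv_left : Disjoint (range v) (Ioo c y) := disjoint_left.mpr fun x hx hxy =>
    hxy.2.ne (hv.subset ⟨hx, hxy.1, hxy.2.trans hy.2.2⟩)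
  have hv_right : Disjoint (range v) (Ioo y d) := disjoint_left.mpr fun x hx hxy =>
    hxy.1.ne' (hv.subset ⟨hx, hy.2.1.trans hxy.1, hxy.2⟩)
  have hu_left := disjoint_range_Ioo_of_forall_fixedPoints (fun g => (h g).mp) hv_left
  have hu_right := disjoint_range_Ioo_of_forall_fixedPoints (fun g => (h g).mp) hv_right
  have hu_y : y ∈ range u := by
    by_contra hy_u
    have hu : Disjoint (range u) (Ioo c d) := disjoint_left.mpr fun x hx hxI => by
      rcases lt_trichotomy x y with hxy | rfl | hxy
      · exact disjoint_left.mp hu_left hx ⟨hxI.1, hxy⟩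
      · exact hy_u hx
      · exact disjoint_left.mp hu_right hx ⟨hxy, hxI.2⟩
    exact disjoint_left.mp (disjoint_range_Ioo_of_forall_fixedPoints (fun g => (h g).mpr) hu)
      hy.1 hy.2
  ext x
  refine ⟨fun ⟨hx, hxI⟩ => ?_, fun hx => hx ▸ ⟨hu_y, hy.2⟩⟩
  rcases lt_trichotomy x y with hxy | rfl | hxy
  · exact absurd ⟨hxI.1, hxy⟩ (disjoint_left.mp hu_left hx)
  · rfl
  · exact absurd ⟨hxy, hxI.2⟩ (disjoint_left.mp hu_right hx)

end FixedPoints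

theorem range_comp_inter_Ioo_eq_singleton {α β : Type*} [LinearOrder α] [LinearOrder β]
    {f : α → β} {w : α → α} {a b x : α} (hf : StrictMono f)
    (hw : range w ∩ Ioo a b = {x}) :
    range (f ∘ w) ∩ Ioo (f a) (f b) = {f x} := by
  have hpre : f ⁻¹' Ioo (f a) (f b) = Ioo a b :=
    (OrderEmbedding.ofStrictMono f hf).preimage_Ioo a b
  rw [range_comp, ← image_inter_preimage, hpre, hw, image_singleton]

section GapEmbedding

variable {K : Type*} [Field K] [LinearOrder K] [IsStrictOrderedRing K] {x₀ r : K}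

def gapEmbedding (x₀ r : K) (t : K) : K :=
  if t < x₀ then t - r else if x₀ < t then t + r else t

theorem strictMono_gapEmbedding (hr : 0 ≤ r) : StrictMono (gapEmbedding x₀ r) := by
  intro s t hst
  simp only [gapEmbedding]
  split_ifs <;> linarith

theorem range_gapEmbedding_inter_Ioo (hr : 0 < r) :
    range (gapEmbedding x₀ r) ∩ Ioo (x₀ - r) (x₀ + r) = {x₀} := by
  ext x
  simp only [mem_inter_iff, mem_range, mem_Ioo, mem_singleton_iff, gapEmbedding]
  constructor
  · rintro ⟨⟨t, rfl⟩, h₁, h₂⟩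
    split_ifs at h₁ h₂ ⊢ <;> linarith
  · intro hx
    rw [hx]
    exact ⟨⟨x₀, by simp⟩, by linarith, by linarith⟩

end GapEmbedding

def Mmon.ofOrderIso (g : ℚ ≃o ℚ) : Mmon := ⟨(g : ℚ → ℚ), g.strictMono⟩

section FixesAut

variable (ξ : Mmon →* Emon) (hinj : Injective ξ)
  (hfix : ∀ f : Mmon, Bijective (f : Function.End ℚ) →
    (ξ f : Function.End ℚ) = (f : Function.End ℚ))

include hinj hfix

theorem range_subset_fixedPoints_iff_range_map (g : ℚ ≃o ℚ) (f : Mmon) :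
    range (f : Function.End ℚ) ⊆ fixedPoints g ↔
      range (ξ f : Function.End ℚ) ⊆ fixedPoints g := by
  have key : ∀ u : Function.End ℚ,
      range u ⊆ fixedPoints g ↔ (Mmon.ofOrderIso g : Function.End ℚ) * u = u :=
    fun u => range_subset_iff.trans funext_iff.symm
  calc range (f : Function.End ℚ) ⊆ fixedPoints g ↔ Mmon.ofOrderIso g * f = f := by
        rw [key, Subtype.ext_iff, Submonoid.coe_mul]
    _ ↔ ξ (Mmon.ofOrderIso g * f) = ξ f := hinj.eq_iff.symm
    _ ↔ (Mmon.ofOrderIso g : Function.End ℚ) * ξ f = ξ f := by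
        rw [map_mul, Subtype.ext_iff, Submonoid.coe_mul, hfix _ g.bijective]
    _ ↔ _ := (key _).symm

theorem strictMono_map (f : Mmon) : StrictMono (ξ f : Function.End ℚ) := by
  set F : ℚ → ℚ := (ξ f : Function.End ℚ)
  have hF : Monotone F := (ξ f).2
  intro x y hxy
  refine lt_of_le_of_ne (hF hxy.le) fun hFxy => ?_
  obtain ⟨g, hg⟩ := exists_orderIso_fixedPoints_eq_compl_Ioo hxy
  have hfixed : ∀ p, g p = p ↔ p ∉ Ioo x y := fun p => Set.ext_iff.mp hg p
  have hconst : ∀ p ∈ Ioo x y, F p = F x := fun p hp =>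
    le_antisymm (hFxy ▸ hF hp.2.le) (hF hp.1.le)
  have hgx : g x = x := (hfixed x).mpr (by simp)
  have hgy : g y = y := (hfixed y).mpr (by simp)
  have hmaps : ∀ p ∈ Ioo x y, g p ∈ Ioo x y := fun p hp =>
    ⟨hgx ▸ g.strictMono hp.1, hgy ▸ g.strictMono hp.2⟩
  have hcomp : ξ (f * Mmon.ofOrderIso g) = ξ f := by
    rw [map_mul, Subtype.ext_iff, Submonoid.coe_mul, hfix (Mmon.ofOrderIso g) g.bijective]
    funext p
    by_cases hp : p ∈ Ioo x y
    · exact (hconst _ (hmaps p hp)).trans (hconst p hp).symm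
    · exact congrArg F ((hfixed p).mpr hp)
  obtain ⟨m, hm⟩ := exists_between hxy
  have hgm : g m = m := f.2.injective (congrFun (congrArg Subtype.val (hinj hcomp)) m :)
  exact (hfixed m).mp hgm hm

theorem exists_map_apply_eq_apply_of_Ioo (f : Mmon) (x₀ : ℚ) {r : ℚ} (hr : 0 < r) :
    ∃ p, (ξ f : Function.End ℚ) p = (f : Function.End ℚ) x₀ ∧
      (p ∈ Ioo (x₀ - r) (x₀ + r) → p = x₀) := by
  set w : Mmon := ⟨gapEmbedding x₀ r, strictMono_gapEmbedding hr.le⟩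
  have hw : range (w : Function.End ℚ) ∩ Ioo (x₀ - r) (x₀ + r) = {x₀} :=
    range_gapEmbedding_inter_Ioo hr
  have hfw : range ((f * w : Mmon) : Function.End ℚ) ∩
      Ioo ((f : Function.End ℚ) (x₀ - r)) ((f : Function.End ℚ) (x₀ + r)) =
        {(f : Function.End ℚ) x₀} :=
    range_comp_inter_Ioo_eq_singleton (f := (f : Function.End ℚ)) (w := (w : Function.End ℚ))
      f.2 hw
  have hξw := range_inter_Ioo_eq_singleton_of_forall_fixedPoints
    (range_subset_fixedPoints_iff_range_map ξ hinj hfix · w) hw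
  have hξfw := range_inter_Ioo_eq_singleton_of_forall_fixedPoints
    (range_subset_fixedPoints_iff_range_map ξ hinj hfix · (f * w)) hfw
  obtain ⟨s, hs⟩ := (hξfw.symm.subset rfl).1
  rw [map_mul, Submonoid.coe_mul] at hs
  exact ⟨_, hs, fun hp => hξw.subset ⟨⟨s, rfl⟩, hp⟩⟩

end FixesAut

/-- **Corollary 2.5.** Any injective monoid homomorphism `ξ : M → E` which fixes every
element of `G = Aut(ℚ,<)` (the invertible members of `M`) pointwise also fixes every
member of `M`. -/
theorem fixes_M_of_fixes_G (ξ : Mmon →* Emon) (hinj : Function.Injective ξ)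
    (hfix : ∀ f : Mmon, Function.Bijective (f : Function.End ℚ) →
      (ξ f : Function.End ℚ) = (f : Function.End ℚ)) :
    ∀ f : Mmon, (ξ f : Function.End ℚ) = (f : Function.End ℚ) := by
  intro f
  funext x₀
  obtain ⟨p, hp, -⟩ := exists_map_apply_eq_apply_of_Ioo ξ hinj hfix f x₀ one_pos
  obtain ⟨q, hq, hq_near⟩ :=
    exists_map_apply_eq_apply_of_Ioo ξ hinj hfix f x₀ (r := |p - x₀| + 1) (by positivity)
  obtain rfl : q = p := (strictMono_map ξ hinj hfix f).injective (hq.trans hp.symm)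
  rw [hq_near ⟨by linarith [neg_abs_le (q - x₀)], by linarith [le_abs_self (q - x₀)]⟩] at hq
  exact hq
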